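/- For natural number m and complex t, the Bateman polynomials satisfy ∑_{n=0}^∞ B_m(−2n−1) t^n/n! = e^t · Z_m(−t), where B_m(z) = ₃F₂(−m, m+1, (z+1)/2; 1, 1; 1) and Z_m(z) = ₂F₂(−m, m+1; 1, 1; z), i.e. ∑_{n=0}^∞ (∑_{k=0}^m ((−m)_k (m+1)_k (−n)_k/(k!)^3)) t^n/n! = e^t ∑_{k=0}^m ((−m)_k (m+1)_k/(k!)^3) (−t)^k. -/

import Mathlib

/-- The rising factorial (Pochhammer symbol) `(a)_k = a(a+1)⋯(a+k-1)`. -/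
noncomputable def risingFactorial (a : ℂ) (k : ℕ) : ℂ :=
  ∏ i ∈ Finset.range k, (a + i)

/-- The Bateman polynomial `B_m` evaluated at `z = −2n−1`:
`B_m(−2n−1) = ∑_{k=0}^m (−m)_k (m+1)_k (−n)_k / (k!)³`. -/
noncomputable def batemanEval (m n : ℕ) : ℂ :=
  ∑ k ∈ Finset.range (m + 1),
    risingFactorial (-(m : ℂ)) k * risingFactorial ((m : ℂ) + 1) k *
      risingFactorial (-(n : ℂ)) k / ((k.factorial : ℂ)) ^ 3

/-!
Since `(−n)_k = (−1)^k n!/(n−k)!` for `k ≤ n` and `(−n)_k = 0` for `n < k`, the series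
`∑ₙ (−n)_k tⁿ/n!` is `(−t)^k` times the exponential series shifted by `k`, so it sums to
`(−t)^k e^t`. The value `B_m(−2n−1)` is a finite linear combination of the `(−n)_k`, and
summing these identities term by term gives `e^t Z_m(−t)`.
-/

open Finset Nat

theorem risingFactorial_neg_natCast (n k : ℕ) :
    risingFactorial (-(n : ℂ)) k = (-1) ^ k * n.descFactorial k := by
  rw [← descPochhammer_eval_eq_descFactorial ℂ, descPochhammer_eval_eq_prod_range,
    risingFactorial]
  nth_rw 2 [← card_range k]
  rw [pow_card_mul_prod]
  exact prod_congr rfl fun _ _ => by ring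

theorem risingFactorial_neg_natCast_of_lt {n k : ℕ} (h : n < k) :
    risingFactorial (-(n : ℂ)) k = 0 := by
  rw [risingFactorial_neg_natCast, descFactorial_eq_zero_iff_lt.2 h, cast_zero, mul_zero]

theorem risingFactorial_neg_natCast_add_mul (j k : ℕ) (t : ℂ) :
    risingFactorial (-((j + k : ℕ) : ℂ)) k * (t ^ (j + k) / (j + k)!) =
      (-t) ^ k * (t ^ j / j !) := by
  have hfact : (j ! : ℂ) * (j + k).descFactorial k = (j + k)! := by
    exact_mod_cast Nat.add_sub_cancel j k ▸ factorial_mul_descFactorial le_add_self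
  have hj : (j ! : ℂ) ≠ 0 := cast_ne_zero.2 (factorial_ne_zero j)
  have hjk : ((j + k)! : ℂ) ≠ 0 := cast_ne_zero.2 (factorial_ne_zero (j + k))
  rw [risingFactorial_neg_natCast, ← hfact]
  field_simp
  ring

theorem hasSum_risingFactorial_neg_natCast_mul (k : ℕ) (t : ℂ) :
    HasSum (fun n : ℕ => risingFactorial (-(n : ℂ)) k * (t ^ n / n !))
      (Complex.exp t * (-t) ^ k) := by
  rw [← hasSum_nat_add_iff' k, sum_eq_zero fun i hi => by
    rw [risingFactorial_neg_natCast_of_lt (mem_range.1 hi), zero_mul], sub_zero]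
  simp_rw [risingFactorial_neg_natCast_add_mul]
  rw [mul_comm]
  exact (Complex.exp_eq_exp_ℂ ▸ NormedSpace.expSeries_div_hasSum_exp t).mul_left _

theorem hasSum_sum_risingFactorial_neg_natCast_mul (s : Finset ℕ) (c : ℕ → ℂ) (t : ℂ) :
    HasSum (fun n : ℕ => (∑ k ∈ s, c k * risingFactorial (-(n : ℂ)) k) * (t ^ n / n !))
      (Complex.exp t * ∑ k ∈ s, c k * (-t) ^ k) := by
  simp_rw [sum_mul, mul_sum, mul_left_comm (Complex.exp t), mul_assoc]
  exact hasSum_sum fun k _ => (hasSum_risingFactorial_neg_natCast_mul k t).mul_left (c k)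

/-- `∑_{n=0}^∞ B_m(−2n−1) t^n/n! = e^t Z_m(−t)`, where
`Z_m(−t) = ∑_{k=0}^m (−m)_k (m+1)_k (−t)^k/(k!)³`. -/
theorem bateman_eval_exp_genfun (m : ℕ) (t : ℂ) :
    ∑' n : ℕ, batemanEval m n * (t ^ n / (n.factorial : ℂ)) =
      Complex.exp t *
        ∑ k ∈ Finset.range (m + 1),
          risingFactorial (-(m : ℂ)) k * risingFactorial ((m : ℂ) + 1) k *
            (-t) ^ k / ((k.factorial : ℂ)) ^ 3 := by
  set c : ℕ → ℂ := fun k =>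
    risingFactorial (-(m : ℂ)) k * risingFactorial ((m : ℂ) + 1) k / (k ! : ℂ) ^ 3
  have hB : ∀ n, batemanEval m n = ∑ k ∈ range (m + 1), c k * risingFactorial (-(n : ℂ)) k :=
    fun n => sum_congr rfl fun k _ => by ring
  have hZ : ∀ k, risingFactorial (-(m : ℂ)) k * risingFactorial ((m : ℂ) + 1) k *
      (-t) ^ k / (k ! : ℂ) ^ 3 = c k * (-t) ^ k := fun k => by ring
  simp_rw [hB, hZ]
  exact (hasSum_sum_risingFactorial_neg_natCast_mul _ c t).tsum_eq
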